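/- arXiv:2005.13767 — 11 statements merged into one kernel-verified Lean document; each statement's English description precedes it below -/
import Mathlib

section
/- Let G be a topological group (no separation axiom assumed) that has a suitable set S. Then G is Hausdorff or G has at most two elements. -/
/-- A subset `S` of a topological group `G` is a *suitable set* for `G` if `S` is
discrete in its subspace topology, `S ∪ {1}` is closed in `G`, and the subgroup
generated by `S` is topologically dense in `G`. -/
def IsSuitable {G : Type*} [Group G] [TopologicalSpace G] (S : Set G) : Prop :=
  DiscreteTopology S ∧ IsClosed (S ∪ {1}) ∧ Dense (Subgroup.closure S : Set G)

/-!
If `G` is not Hausdorff, pick `x ≠ 1` in `closure {1}`. For `s ∈ S`, the point `s * x` is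
inseparable from `s`, so it lies in the closed set `S ∪ {1}`; discreteness of `S` forbids
`s * x ∈ S`, hence `s = x⁻¹`. Thus `S` lies in the closed subgroup `closure {1}`, which is then
dense, so `G = closure {1} ⊆ S ∪ {1} ⊆ {1, x⁻¹}`.
-/

theorem Inseparable.eq_or_eq_of_isClosed_union_singleton {X : Type*} [TopologicalSpace X]
    {S : Set X} [T0Space S] {p s y : X} (hSp : IsClosed (S ∪ {p})) (hs : s ∈ S)
    (hsy : Inseparable s y) : y = s ∨ y = p := by
  have hy : y ∈ S ∪ {p} :=
    closure_minimal (Set.singleton_subset_iff.mpr (Set.mem_union_left _ hs)) hSp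
      (specializes_iff_mem_closure.mp hsy.specializes)
  rcases hy with hy | hy
  · have : Inseparable (⟨s, hs⟩ : S) ⟨y, hy⟩ :=
      Topology.IsInducing.subtypeVal.inseparable_iff.mp hsy
    exact Or.inl (congrArg Subtype.val this.eq).symm
  · exact Or.inr hy

section TopologicalGroup

variable {G : Type*} [Group G] [TopologicalSpace G] [IsTopologicalGroup G]

theorem subset_singleton_inv_of_mem_closure_one {S : Set G} [T0Space S]
    (hS : IsClosed (S ∪ {1})) {x : G} (hx : x ∈ closure {1}) (hx1 : x ≠ 1) : S ⊆ {x⁻¹} := by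
  intro s hs
  have hx_insep : Inseparable x 1 :=
    group_inseparable_iff.mpr (by rwa [div_one, ← Set.singleton_one])
  have hsx : Inseparable s (s * x) := by simpa using (Inseparable.refl s).mul hx_insep.symm
  rcases hsx.eq_or_eq_of_isClosed_union_singleton hS hs with h | h
  · exact absurd (mul_eq_left.mp h) hx1
  · exact eq_inv_of_mul_eq_one_left h

theorem closure_one_eq_univ_of_dense_subgroupClosure {S : Set G}
    (hdense : Dense (Subgroup.closure S : Set G)) (hS : S ⊆ closure {1}) :
    closure ({1} : Set G) = Set.univ := by
  have hle : Subgroup.closure S ≤ (⊥ : Subgroup G).topologicalClosure :=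
    (Subgroup.closure_le _).mpr (by rwa [Subgroup.coe_topologicalClosure_bot])
  have := (hdense.mono (SetLike.coe_subset_coe.mpr hle)).closure_eq
  rwa [Subgroup.coe_topologicalClosure_bot, closure_closure] at this

end TopologicalGroup

/-- If a topological group (no separation axiom assumed) has a suitable set,
then it is Hausdorff or has at most two elements. -/
theorem suitable_set_implies_hausdorff_or_card_le_two
    {G : Type*} [Group G] [TopologicalSpace G] [IsTopologicalGroup G]
    (S : Set G) (hS : IsSuitable S) :
    T2Space G ∨ ∃ a b : G, ∀ x : G, x = a ∨ x = b := by
  obtain ⟨hdisc, hclosed, hdense⟩ := hS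
  rw [or_iff_not_imp_left, IsTopologicalGroup.t2Space_iff_one_closed,
    ← closure_subset_iff_isClosed]
  intro hnot_closed
  obtain ⟨x, hx, hx1⟩ := Set.not_subset.mp hnot_closed
  have hSx : S ⊆ {x⁻¹} := subset_singleton_inv_of_mem_closure_one hclosed hx hx1
  have hx_inv : x⁻¹ ∈ closure ({1} : Set G) := by
    rw [← Subgroup.coe_topologicalClosure_bot] at hx ⊢
    exact Subgroup.inv_mem _ hx
  have hG := closure_one_eq_univ_of_dense_subgroupClosure hdense
    (hSx.trans (Set.singleton_subset_iff.mpr hx_inv))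
  refine ⟨1, x⁻¹, fun g => ?_⟩
  have hg : g ∈ S ∪ {1} :=
    closure_minimal Set.subset_union_right hclosed (hG ▸ Set.mem_univ g)
  rcases hg with hg | hg
  · exact Or.inr (hSx hg)
  · exact Or.inl hg
end

section
/- Let G be a Hausdorff topological group in which {1} is a Gδ-set (i.e., G has countable pseudocharacter) and in which every closed discrete subspace is countable (i.e., G has countable extent). If G has a suitable set, then G is separable. -/
open Set

theorem Set.Countable.subgroupClosure {G : Type*} [Group G] {s : Set G} (hs : s.Countable) :
    (Subgroup.closure s : Set G).Countable := by
  have := hs.to_subtype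
  rw [FreeGroup.closure_eq_range, MonoidHom.coe_range]
  exact countable_range _

theorem Set.Countable.of_discreteTopology_of_isClosed_union_singleton {X : Type*}
    [TopologicalSpace X] (hext : ∀ D : Set X, IsClosed D → DiscreteTopology D → D.Countable)
    {a : X} (ha : IsGδ ({a} : Set X)) {S : Set X} (hdisc : DiscreteTopology S)
    (hclosed : IsClosed (S ∪ {a})) : S.Countable := by
  obtain ⟨U, hUopen, hU⟩ := ha.eq_iInter_nat
  have ha_mem (n : ℕ) : a ∈ U n := mem_iInter.mp (hU ▸ mem_singleton a) n
  have hpiece (n : ℕ) : S \ U n = (S ∪ {a}) \ U n := by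
    rw [union_sdiff_distrib, sdiff_eq_empty.mpr (singleton_subset_iff.mpr (ha_mem n)),
      union_empty]
  refine Countable.of_sdiff (t := {a}) ?_ (countable_singleton a)
  rw [hU, sdiff_iInter]
  refine countable_iUnion fun n => hext _ ?_ (DiscreteTopology.of_subset hdisc sdiff_subset)
  rw [hpiece]
  exact hclosed.sdiff (hUopen n)

theorem separable_of_suitable_set_of_countable_extent_and_pseudocharacter_general
    {G : Type*} [Group G] [TopologicalSpace G]
    (hGδ : IsGδ ({1} : Set G))
    (hext : ∀ D : Set G, IsClosed D → DiscreteTopology D → D.Countable)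
    (S : Set G) (hS : IsSuitable S) :
    TopologicalSpace.SeparableSpace G := by
  obtain ⟨hdisc, hclosed, hdense⟩ := hS
  have hS_countable : S.Countable :=
    .of_discreteTopology_of_isClosed_union_singleton hext hGδ hdisc hclosed
  exact ⟨⟨_, hS_countable.subgroupClosure, hdense⟩⟩

/-- A Hausdorff topological group of countable pseudocharacter (`{1}` is Gδ) and
countable extent (every closed discrete subspace is countable) which has a
suitable set is separable. -/
theorem separable_of_suitable_set_of_countable_extent_and_pseudocharacter
    {G : Type*} [Group G] [TopologicalSpace G] [IsTopologicalGroup G] [T2Space G]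
    (hGδ : IsGδ ({1} : Set G))
    (hext : ∀ D : Set G, IsClosed D → DiscreteTopology D → D.Countable)
    (S : Set G) (hS : IsSuitable S) :
    TopologicalSpace.SeparableSpace G :=
  separable_of_suitable_set_of_countable_extent_and_pseudocharacter_general hGδ hext S hS
end

section
/- Let G be a nondiscrete Hausdorff topological group and let U be a nonempty open subset of G such that the subgroup generated by U is all of G. Then every point x ∈ U has an open neighborhood V with V ⊆ U such that the subgroup generated by U ∖ closure(V) is all of G. -/
/-!
Pick `a ≠ b` in `U`, both different from `x`, with `g * x ∈ U` for `g = a * b⁻¹`; then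
`g * x ≠ x`. Since topological groups are regular, we can take `V` so small around `x` that
`closure V` avoids `a` and `b`, is moved by `g` into `U`, and is disjoint from its `g`-translate.
Then `a`, `b`, hence `g`, lie in `⟨U \ closure V⟩`, and every `u ∈ closure V` is `g⁻¹ * (g * u)`
with `g * u ∈ U \ closure V`, so `⟨U \ closure V⟩ ⊇ U`.
-/

open Filter Topology

theorem Subgroup.closure_diff_eq_closure {G : Type*} [Group G] {U K : Set G} {g : G}
    (hg : g ∈ closure (U \ K)) (hK : ∀ u ∈ U ∩ K, g * u ∈ U \ K) :
    closure (U \ K) = closure U := by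
  refine le_antisymm (closure_mono Set.sdiff_subset) (closure_le _ |>.mpr fun u hu => ?_)
  by_cases huK : u ∈ K
  · exact (mul_mem_cancel_left hg).mp (subset_closure (hK u ⟨hu, huK⟩))
  · exact subset_closure ⟨hu, huK⟩

theorem dense_compl_singleton_of_not_discreteTopology {G : Type*} [Group G] [TopologicalSpace G]
    [ContinuousConstSMul G G] (hnd : ¬DiscreteTopology G) (y : G) : Dense ({y}ᶜ : Set G) :=
  dense_compl_singleton_iff_not_open.mpr fun hy =>
    hnd ((MulAction.IsPretransitive.discreteTopology_iff G y).mpr hy)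

theorem exists_mul_inv_mul_mem_of_not_discreteTopology {G : Type*} [Group G]
    [TopologicalSpace G] [ContinuousMul G] [T1Space G] (hnd : ¬DiscreteTopology G)
    {U : Set G} (hU : IsOpen U) {x : G} (hx : x ∈ U) :
    ∃ a ∈ U, ∃ b ∈ U, a ≠ x ∧ b ≠ x ∧ a ≠ b ∧ a * b⁻¹ * x ∈ U := by
  obtain ⟨b, hbU, hbx⟩ :=
    (dense_compl_singleton_of_not_discreteTopology hnd x).inter_open_nonempty U hU ⟨x, hx⟩
  let O := U ∩ (fun y => y * b⁻¹ * x) ⁻¹' U ∩ {x}ᶜ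
  have hO : IsOpen O :=
    (hU.inter (hU.preimage (by fun_prop))).inter isOpen_compl_singleton
  have hbO : b ∈ O := ⟨⟨hbU, by simpa using hx⟩, hbx⟩
  obtain ⟨a, ⟨⟨haU, habx⟩, hax⟩, hab⟩ :=
    (dense_compl_singleton_of_not_discreteTopology hnd b).inter_open_nonempty O hO ⟨b, hbO⟩
  exact ⟨a, haU, b, hbU, hax, hbx, hab, habx⟩

theorem exists_mem_nhds_forall_apply_notMem {X : Type*} [TopologicalSpace X] [T2Space X]
    {f : X → X} {x : X} (hf : ContinuousAt f x) (hfx : f x ≠ x) :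
    ∃ W ∈ 𝓝 x, ∀ y ∈ W, f y ∉ W := by
  obtain ⟨A, B, hA, hB, hAB⟩ := t2_separation_nhds hfx.symm
  exact ⟨A ∩ f ⁻¹' B, inter_mem hA (hf hB),
    fun y hy hfy => Set.disjoint_left.mp hAB hfy.1 hy.2⟩

theorem exists_open_nhd_removal_still_generates_general
    {G : Type*} [Group G] [TopologicalSpace G] [IsTopologicalGroup G] [T2Space G]
    (hnd : ¬ DiscreteTopology G)
    (U : Set G) (hUopen : IsOpen U)
    (hUgen : Subgroup.closure U = ⊤) :
    ∀ x ∈ U, ∃ V : Set G, IsOpen V ∧ x ∈ V ∧ V ⊆ U ∧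
      Subgroup.closure (U \ closure V) = ⊤ := by
  intro x hx
  obtain ⟨a, haU, b, hbU, hax, hbx, hab, hgxU⟩ :=
    exists_mul_inv_mul_mem_of_not_discreteTopology hnd hUopen hx
  set g := a * b⁻¹
  have hgx : g * x ≠ x := fun h => hab (mul_inv_eq_one.mp (mul_eq_right.mp h))
  have hg : ContinuousAt (g * ·) x := (continuous_const_mul g).continuousAt
  obtain ⟨W, hW, hgW⟩ := exists_mem_nhds_forall_apply_notMem hg hgx
  have hW' : U \ {a, b} ∩ (g * ·) ⁻¹' U ∩ W ∈ 𝓝 x := by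
    refine inter_mem (inter_mem ?_ (hg.preimage_mem_nhds (hUopen.mem_nhds hgxU))) hW
    exact (hUopen.sdiff (Set.toFinite _).isClosed).mem_nhds ⟨hx, by simp [hax.symm, hbx.symm]⟩
  obtain ⟨V, ⟨hxV, hV⟩, hVW⟩ := (hasBasis_opens_closure x).mem_iff.mp hW'
  refine ⟨V, hV, hxV, fun v hv => (hVW (subset_closure hv)).1.1.1, ?_⟩
  rw [← hUgen]
  refine Subgroup.closure_diff_eq_closure (g := g) ?_ fun u ⟨_, hu⟩ => ?_
  · exact mul_mem (Subgroup.subset_closure ⟨haU, fun h => (hVW h).1.1.2 (by simp)⟩)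
      (inv_mem (Subgroup.subset_closure ⟨hbU, fun h => (hVW h).1.1.2 (by simp)⟩))
  · exact ⟨(hVW hu).1.2, fun h => hgW u (hVW hu).2 (hVW h).2⟩

/-- In a nondiscrete Hausdorff topological group, if a nonempty open set `U`
generates `G`, then every `x ∈ U` has an open neighborhood `V ⊆ U` such that
`U \ closure V` still generates `G`. -/
theorem exists_open_nhd_removal_still_generates
    {G : Type*} [Group G] [TopologicalSpace G] [IsTopologicalGroup G] [T2Space G]
    (hnd : ¬ DiscreteTopology G)
    (U : Set G) (hUopen : IsOpen U) (hUne : U.Nonempty)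
    (hUgen : Subgroup.closure U = ⊤) :
    ∀ x ∈ U, ∃ V : Set G, IsOpen V ∧ x ∈ V ∧ V ⊆ U ∧
      Subgroup.closure (U \ closure V) = ⊤ :=
  exists_open_nhd_removal_still_generates_general hnd U hUopen hUgen
end

section
/- Every countable Hausdorff topological group G has a closed suitable set that generates G algebraically; that is, there exists a subset S of G such that S is closed in G, S is discrete in its subspace topology, and the subgroup generated by S equals G. -/
/-!
Enumerate `G = {x₀, x₁, …}`; if `G` is discrete, take `S = G`. Otherwise choose neighbourhoods
`U k` of `1` so fine that `U k` contains a translate of `U (k + 1)` missing any two prescribed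
translates of `U (k + 1)`. Descending through them, the finitely many sets `x k • U (k + 1)` and
`g⁻¹ x k • U (k + 1)`, `k ≤ n`, never cover `G`, so there is `aₙ` with `aₙ` and `xₙ aₙ` outside
`x k • U (k + 1)` for all `k ≤ n`. The set `S = {aₙ} ∪ {xₙ aₙ}` then meets each neighbourhood
`x k • U (k + 1)` of `x k` in finitely many points, so it is closed and discrete, and it generates
`G` because `xₙ = (xₙ aₙ) aₙ⁻¹`.
-/

open Set Filter Topology Pointwise

theorem isClosed_and_discreteTopology_of_finite_inter_nhds {X : Type*} [TopologicalSpace X]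
    [T1Space X] {S : Set X} (h : ∀ x, ∃ t ∈ 𝓝 x, (t ∩ S).Finite) :
    IsClosed S ∧ DiscreteTopology S := by
  have hS : Sᶜ ∈ codiscrete X :=
    codiscreteWithin_iff_locallyFiniteComplementWithin.2 (by simpa using h)
  rwa [mem_codiscrete', compl_compl, isOpen_compl_iff, isDiscrete_iff_discreteTopology] at hS

theorem finite_inter_range_of_forall_ge_notMem {X : Type*} {W : Set X} {s : ℕ → X} {k : ℕ}
    (h : ∀ n ≥ k, s n ∉ W) : (W ∩ range s).Finite := by
  refine ((finite_Iio k).image s).subset ?_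
  rintro _ ⟨hW, n, rfl⟩
  exact ⟨n, not_le.1 fun hn => h n hn hW, rfl⟩

theorem isClosed_and_discreteTopology_range_union_range {X : Type*} [TopologicalSpace X]
    [T1Space X] {x : ℕ → X} (hx : Function.Surjective x) {W : ℕ → Set X}
    (hW : ∀ k, W k ∈ 𝓝 (x k)) {a b : ℕ → X} (hab : ∀ n, ∀ k ≤ n, a n ∉ W k ∧ b n ∉ W k) :
    IsClosed (range a ∪ range b) ∧ DiscreteTopology ↥(range a ∪ range b) := by
  refine isClosed_and_discreteTopology_of_finite_inter_nhds fun y => ?_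
  obtain ⟨k, rfl⟩ := hx y
  refine ⟨W k, hW k, ?_⟩
  rw [inter_union_distrib_left]
  exact (finite_inter_range_of_forall_ge_notMem fun n hn => (hab n k hn).1).union
    (finite_inter_range_of_forall_ge_notMem fun n hn => (hab n k hn).2)

theorem Subgroup.closure_range_union_range_mul_eq_top {G : Type*} [Group G] {x : ℕ → G}
    (hx : Function.Surjective x) (a : ℕ → G) :
    Subgroup.closure (range a ∪ range fun n => x n * a n) = ⊤ := by
  refine (Subgroup.eq_top_iff' _).2 fun g => ?_
  obtain ⟨n, rfl⟩ := hx g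
  have ha : a n ∈ Subgroup.closure (range a ∪ range fun n => x n * a n) :=
    Subgroup.subset_closure (Or.inl ⟨n, rfl⟩)
  have hxa : x n * a n ∈ Subgroup.closure (range a ∪ range fun n => x n * a n) :=
    Subgroup.subset_closure (Or.inr ⟨n, rfl⟩)
  simpa using mul_mem hxa (inv_mem ha)

def HasDisjointTranslateIn (G : Type*) {α : Type*} [SMul G α] (m : ℕ) (V U : Set α) : Prop :=
  ∀ Y : Finset G, Y.card ≤ m → ∃ p : G, p • V ⊆ U ∧ ∀ y ∈ Y, Disjoint (p • V) (y • V)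

theorem exists_smul_disjoint_of_hasDisjointTranslateIn {G α : Type*} [Group G] [MulAction G α]
    {U : ℕ → Set α} {m : ℕ}
    (hU : ∀ k, HasDisjointTranslateIn G m (U (k + 1)) (U k)) (Y : ℕ → Finset G)
    (hY : ∀ k, (Y k).card ≤ m) (n : ℕ) :
    ∃ c : G, ∀ k < n, ∀ y ∈ Y k, Disjoint (c • U n) (y • U (k + 1)) := by
  classical
  induction n with
  | zero => exact ⟨1, by simp⟩
  | succ n ih =>
    obtain ⟨c, hc⟩ := ih
    obtain ⟨p, hpU, hpY⟩ := hU n ((Y n).image (c⁻¹ • ·)) (Finset.card_image_le.trans (hY n))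
    have hsub : (c * p) • U (n + 1) ⊆ c • U n := by
      rw [mul_smul]
      exact smul_set_mono hpU
    refine ⟨c * p, fun k hk y hy => ?_⟩
    rcases Nat.lt_succ_iff_lt_or_eq.1 hk with hk | rfl
    · exact (hc k hk y hy).mono_left hsub
    · rw [mul_smul, disjoint_smul_set_left, smul_smul]
      exact hpY _ (Finset.mem_image_of_mem _ hy)

theorem exists_forall_le_notMem_smul_of_hasDisjointTranslateIn {G : Type*} [Group G]
    {U : ℕ → Set G} (hU1 : ∀ k, (1 : G) ∈ U k)
    (hU : ∀ k, HasDisjointTranslateIn G 2 (U (k + 1)) (U k)) (x : ℕ → G) (n : ℕ) (g : G) :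
    ∃ a : G, ∀ k ≤ n, a ∉ x k • U (k + 1) ∧ g * a ∉ x k • U (k + 1) := by
  classical
  obtain ⟨c, hc⟩ := exists_smul_disjoint_of_hasDisjointTranslateIn hU
    (fun k => {x k, g⁻¹ * x k}) (fun _ => Finset.card_le_two) (n + 1)
  have hcU : c ∈ c • U (n + 1) := by simpa using smul_mem_smul_set (a := c) (hU1 (n + 1))
  refine ⟨c, fun k hk => ⟨fun h => ?_, fun h => ?_⟩⟩
  · exact (hc k (Nat.lt_succ_of_le hk) (x k) (by simp)).notMem_of_mem_left hcU h
  · refine (hc k (Nat.lt_succ_of_le hk) (g⁻¹ * x k) (by simp)).notMem_of_mem_left hcU ?_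
    rwa [mul_smul, mem_smul_set_iff_inv_smul_mem, inv_inv, smul_eq_mul]

section TopologicalGroup

variable {G : Type*} [Group G] [TopologicalSpace G] [IsTopologicalGroup G] [T1Space G]

theorem exists_nhds_one_subset_forall_not_disjoint_smul_eq (t : Finset G)
    {U : Set G} (hU : U ∈ 𝓝 (1 : G)) :
    ∃ V ∈ 𝓝 (1 : G), V ⊆ U ∧ ∀ y : G, ∀ p ∈ t, ∀ q ∈ t,
      ¬Disjoint (p • V) (y • V) → ¬Disjoint (q • V) (y • V) → p = q := by
  set W : Set G := ⋂ p ∈ t, ⋂ q ∈ t, {z | z = p⁻¹ * q → p = q}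
  have hW : W ∈ 𝓝 (1 : G) := by
    refine (biInter_finset_mem t).2 fun p _ => (biInter_finset_mem t).2 fun q _ => ?_
    by_cases hpq : p = q
    · simp [hpq]
    · refine mem_of_superset (compl_singleton_mem_nhds (x := p⁻¹ * q) ?_) fun z hz h => ?_
      · rwa [ne_comm, Ne, inv_mul_eq_one]
      · exact absurd h hz
  obtain ⟨V₀, hV₀, hV₀W⟩ := exists_nhds_one_split4 hW
  refine ⟨U ∩ V₀ ∩ V₀⁻¹, inter_mem (inter_mem hU hV₀) (inv_mem_nhds_one G hV₀),
    inter_subset_left.trans inter_subset_left, fun y p hp q hq => ?_⟩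
  simp only [not_disjoint_iff, mem_smul_set, smul_eq_mul]
  rintro ⟨_, ⟨v, hv, rfl⟩, w, hw, hvw⟩ ⟨_, ⟨v', hv', rfl⟩, w', hw', hvw'⟩
  have hpq : p⁻¹ * q = v * w⁻¹ * w' * v'⁻¹ := by
    rw [eq_mul_inv_of_mul_eq hvw.symm, eq_mul_inv_of_mul_eq hvw'.symm]
    group
  have hmem : p⁻¹ * q ∈ W :=
    hpq ▸ hV₀W hv.1.2 (by simpa using hw.2) hw'.1.2 (by simpa using hv'.2)
  simp only [W, mem_iInter] at hmem
  exact hmem p hp q hq rfl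

variable [(𝓝[≠] (1 : G)).NeBot]

theorem exists_nhds_one_hasDisjointTranslateIn {U : Set G} (hU : U ∈ 𝓝 (1 : G)) (m : ℕ) :
    ∃ V ∈ 𝓝 (1 : G), HasDisjointTranslateIn G m V U := by
  classical
  obtain ⟨t, htU, ht⟩ :=
    (infinite_of_mem_nhds (1 : G) (interior_mem_nhds.2 hU)).exists_subset_card_eq (m + 1)
  have hU' : (⋂ p ∈ t, p⁻¹ • U) ∈ 𝓝 (1 : G) := (biInter_finset_mem t).2 fun p hp => by
    simpa using (smul_mem_nhds_smul_iff p⁻¹).2 (mem_interior_iff_mem_nhds.1 (htU hp))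
  obtain ⟨V, hV, hVU, hsep⟩ := exists_nhds_one_subset_forall_not_disjoint_smul_eq t hU'
  refine ⟨V, hV, fun Y hY => ?_⟩
  -- each translate `y • V` meets `p • V` for at most one `p ∈ t`, and `t` has `m + 1` elements
  have hbad : (Y.biUnion fun y => t.filter fun p => ¬Disjoint (p • V) (y • V)).card < t.card :=
    calc _ ≤ Y.card * 1 := Finset.card_biUnion_le_card_mul _ _ _ fun y _ =>
          Finset.card_le_one.2 fun p hp q hq =>
            hsep y p (Finset.mem_filter.1 hp).1 q (Finset.mem_filter.1 hq).1
              (Finset.mem_filter.1 hp).2 (Finset.mem_filter.1 hq).2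
      _ < t.card := by omega
  obtain ⟨p, hpt, hp⟩ := Finset.exists_mem_notMem_of_card_lt_card hbad
  refine ⟨p, ?_, fun y hy => ?_⟩
  · calc p • V ⊆ p • p⁻¹ • U := smul_set_mono (hVU.trans (biInter_subset_of_mem hpt))
      _ = U := smul_inv_smul p U
  · by_contra h
    exact hp (Finset.mem_biUnion.2 ⟨y, hy, Finset.mem_filter.2 ⟨hpt, h⟩⟩)

theorem exists_seq_nhds_one_hasDisjointTranslateIn (m : ℕ) :
    ∃ U : ℕ → Set G, (∀ k, U k ∈ 𝓝 (1 : G)) ∧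
      ∀ k, HasDisjointTranslateIn G m (U (k + 1)) (U k) := by
  choose next hnext hroom using
    fun V : {V : Set G // V ∈ 𝓝 (1 : G)} => exists_nhds_one_hasDisjointTranslateIn V.2 m
  let f : {V : Set G // V ∈ 𝓝 (1 : G)} → {V : Set G // V ∈ 𝓝 (1 : G)} :=
    fun V => ⟨next V, hnext V⟩
  refine ⟨fun k => (f^[k] ⟨univ, univ_mem⟩).1, fun k => (f^[k] _).2, fun k => ?_⟩
  simp only [Function.iterate_succ_apply']
  exact hroom _

end TopologicalGroup

/-- Every countable Hausdorff topological group has a closed discrete subset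
generating the whole group algebraically (a closed suitable set generating `G`). -/
theorem countable_group_has_closed_generating_suitable_set
    {G : Type*} [Group G] [TopologicalSpace G] [IsTopologicalGroup G] [T2Space G]
    [Countable G] :
    ∃ S : Set G, IsClosed S ∧ DiscreteTopology S ∧ Subgroup.closure S = ⊤ := by
  by_cases hG : (𝓝[≠] (1 : G)).NeBot
  · obtain ⟨x, hx⟩ := exists_surjective_nat G
    obtain ⟨U, hU, hroom⟩ := exists_seq_nhds_one_hasDisjointTranslateIn (G := G) 2
    choose a ha using fun n => exists_forall_le_notMem_smul_of_hasDisjointTranslateIn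
      (fun k => mem_of_mem_nhds (hU k)) hroom x n (x n)
    obtain ⟨hclosed, hdiscrete⟩ := isClosed_and_discreteTopology_range_union_range hx
      (fun k => smul_mem_nhds_self.2 (hU (k + 1))) ha
    exact ⟨_, hclosed, hdiscrete, Subgroup.closure_range_union_range_mul_eq_top hx a⟩
  · rw [not_neBot, ← isOpen_singleton_iff_punctured_nhds] at hG
    have := discreteTopology_of_isOpen_singleton_one hG
    exact ⟨univ, isClosed_univ, inferInstance, Subgroup.closure_univ⟩
end

section
/- Let G be a topological group that is not left precompact, i.e., there is a neighborhood U of the identity such that F·U ≠ G for every finite subset F of G. Then there exist an open neighborhood V of the identity and an injective sequence (pₙ)ₙ∈ℕ of points of G such that for each p ∈ G the set p·V intersects at most one member of the family {pₙ·V : n ∈ ℕ}. -/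
/-!
Pick an open `V ∋ 1` with `W := V / V * (V / V) ⊆ U`. If `x V` meets both `a V` and `b V`, then
`a⁻¹ b ∈ W`. Since no finitely many left translates of `W` cover `G`, points `pₙ` can be chosen
one at a time outside `p₀ W ∪ ⋯ ∪ pₙ₋₁ W`; as `W` is symmetric, `(p m)⁻¹ p n ∉ W` for all `m ≠ n`.
-/

open Pointwise Topology

section

variable {G : Type*} [Group G]

theorem exists_seq_pairwise_inv_mul_notMem {W : Set G} (hW : W⁻¹ = W)
    (hcov : ∀ F : Set G, F.Finite → F * W ≠ Set.univ) :
    ∃ p : ℕ → G, Pairwise fun m n => (p m)⁻¹ * p n ∉ W := by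
  obtain ⟨p, -, hp⟩ := exists_seq_of_forall_finset_exists (fun _ => True)
    (fun g h => g⁻¹ * h ∉ W) fun F _ => by
      obtain ⟨y, hy⟩ := Set.ne_univ_iff_exists_notMem _ |>.1 (hcov F F.finite_toSet)
      exact ⟨y, trivial, fun x hx hxy => hy ⟨x, hx, _, hxy, mul_inv_cancel_left x y⟩⟩
  refine ⟨p, fun m n hmn => ?_⟩
  rcases hmn.lt_or_gt with hlt | hgt
  · exact hp m n hlt
  · intro hmem
    have hinv := Set.inv_mem_inv.2 hmem
    rw [hW, mul_inv_rev, inv_inv] at hinv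
    exact hp n m hgt hinv

theorem inv_mul_mem_div_mul_div_of_nonempty_inter {V : Set G} {x a b : G}
    (ha : ({x} * V ∩ ({a} * V)).Nonempty) (hb : ({x} * V ∩ ({b} * V)).Nonempty) :
    a⁻¹ * b ∈ V / V * (V / V) := by
  simp only [Set.singleton_mul] at ha hb
  obtain ⟨_, ⟨v₁, hv₁, rfl⟩, w₁, hw₁, hxa⟩ := ha
  obtain ⟨_, ⟨v₂, hv₂, rfl⟩, w₂, hw₂, hxb⟩ := hb
  have hab : a⁻¹ * b = w₁ / v₁ * (v₂ / w₂) := by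
    rw [eq_mul_inv_of_mul_eq hxa, eq_mul_inv_of_mul_eq hxb, div_eq_mul_inv, div_eq_mul_inv]
    group
  exact hab ▸ Set.mul_mem_mul (Set.div_mem_div hw₁ hv₁) (Set.div_mem_div hv₂ hw₂)

end

section

variable {G : Type*} [Group G] [TopologicalSpace G] [IsTopologicalGroup G]

theorem exists_open_nhds_one_div_subset {U : Set G} (hU : U ∈ 𝓝 1) :
    ∃ V : Set G, IsOpen V ∧ (1 : G) ∈ V ∧ V / V ⊆ U := by
  obtain ⟨W, hW, -, hWinv, hWU⟩ := exists_closed_nhds_one_inv_eq_mul_subset hU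
  refine ⟨interior W, isOpen_interior, mem_interior_iff_mem_nhds.2 hW, ?_⟩
  calc interior W / interior W ⊆ W / W := Set.div_subset_div interior_subset interior_subset
    _ = W * W := by rw [div_eq_mul_inv, hWinv]
    _ ⊆ U := hWU

theorem exists_open_nhds_one_div_mul_div_subset {U : Set G} (hU : U ∈ 𝓝 1) :
    ∃ V : Set G, IsOpen V ∧ (1 : G) ∈ V ∧ V / V * (V / V) ⊆ U := by
  obtain ⟨W, hWo, hW1, hWU⟩ := exists_open_nhds_one_mul_subset hU
  obtain ⟨V, hVo, hV1, hVW⟩ := exists_open_nhds_one_div_subset (hWo.mem_nhds hW1)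
  exact ⟨V, hVo, hV1, (Set.mul_subset_mul hVW hVW).trans hWU⟩

end

/-- If a topological group is not left precompact, then there are an open
neighborhood `V` of the identity and an injective sequence `p : ℕ → G` such that
each translate `p·V` meets at most one member of the family `{pₙ·V : n ∈ ℕ}`. -/
theorem exists_separated_sequence_of_not_leftPrecompact
    {G : Type*} [Group G] [TopologicalSpace G] [IsTopologicalGroup G]
    (hnp : ∃ U ∈ nhds (1 : G), ∀ F : Set G, F.Finite → F * U ≠ Set.univ) :
    ∃ V : Set G, IsOpen V ∧ (1 : G) ∈ V ∧ ∃ p : ℕ → G, Function.Injective p ∧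
      ∀ x : G, ∀ m n : ℕ,
        (({x} * V) ∩ ({p m} * V)).Nonempty → (({x} * V) ∩ ({p n} * V)).Nonempty → m = n := by
  obtain ⟨U, hU, hcov⟩ := hnp
  obtain ⟨V, hVo, hV1, hVU⟩ := exists_open_nhds_one_div_mul_div_subset hU
  have hsymm : (V / V * (V / V))⁻¹ = V / V * (V / V) := by rw [mul_inv_rev, inv_div]
  obtain ⟨p, hp⟩ := exists_seq_pairwise_inv_mul_notMem hsymm fun F hF hFV =>
    hcov F hF (Set.eq_univ_of_univ_subset (hFV ▸ Set.mul_subset_mul_left hVU))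
  have hone : (1 : G) ∈ V / V * (V / V) := by
    simpa using Set.mul_mem_mul (Set.div_mem_div hV1 hV1) (Set.div_mem_div hV1 hV1)
  refine ⟨V, hVo, hV1, p, fun m n hpmn => ?_, fun x m n hm hn => ?_⟩
  · by_contra hmn
    exact hp hmn (by rwa [hpmn, inv_mul_cancel])
  · by_contra hmn
    exact hp hmn (inv_mul_mem_div_mul_div_of_nonempty_inter hm hn)
end

section
/- Let G be a Hausdorff topological group and H an open subgroup of G. If H (with its subspace topology) has a suitable set, then G has a suitable set; if H has a closed suitable set, then G has a closed suitable set. -/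
open Set Topology Filter Pointwise

section Topology

variable {X Y : Type*} [TopologicalSpace X] [TopologicalSpace Y]

theorem isClosed_and_isDiscrete_of_locally_finite [T1Space X] {S : Set X}
    (h : ∀ x, ∃ U ∈ 𝓝 x, (U ∩ S).Finite) : IsClosed S ∧ IsDiscrete S := by
  rw [← compl_mem_codiscrete_iff, codiscrete, codiscreteWithin_iff_locallyFiniteComplementWithin]
  simpa using h

theorem Set.InjOn.isClosed_and_isDiscrete [T1Space X] [DiscreteTopology Y] {f : X → Y}
    {S : Set X} (hf : Continuous f) (hS : InjOn f S) : IsClosed S ∧ IsDiscrete S :=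
  isClosed_and_isDiscrete_of_locally_finite fun x =>
    ⟨f ⁻¹' {f x}, (isOpen_discrete _).preimage hf |>.mem_nhds rfl,
      Subsingleton.finite fun _ ha _ hb => hS ha.2 hb.2 (ha.1.trans hb.1.symm)⟩

theorem IsDiscrete.union_of_isClopen {U s t : Set X} (hU : IsClopen U) (hs : IsDiscrete s)
    (ht : IsDiscrete t) (hsU : s ⊆ U) (htU : t ⊆ Uᶜ) : IsDiscrete (s ∪ t) := by
  rw [isDiscrete_iff_forall_mem_exists_isOpen] at *
  rintro x (hx | hx)
  · obtain ⟨V, hV, hVs⟩ := hs x hx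
    refine ⟨V ∩ U, hV.inter hU.isOpen, ?_⟩
    rw [inter_union_distrib_left, ← hVs]
    grind
  · obtain ⟨V, hV, hVt⟩ := ht x hx
    refine ⟨V ∩ Uᶜ, hV.inter hU.isClosed.isOpen_compl, ?_⟩
    rw [inter_union_distrib_left, ← hVt]
    grind

end Topology

section Group

variable {G : Type*} [Group G]

theorem Subgroup.eq_top_of_mul_eq_univ {L H : Subgroup G} {T : Set G} (hT : T ⊆ L) (hH : H ≤ L)
    (hTH : T * (H : Set G) = univ) : L = ⊤ := by
  refine eq_top_iff.2 fun g _ => ?_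
  obtain ⟨t, ht, h, hh, rfl⟩ : g ∈ T * (H : Set G) := hTH ▸ mem_univ g
  exact L.mul_mem (hT ht) (hH hh)

theorem Subgroup.IsComplement.injOn_mk {H : Subgroup G} {T : Set G} (hT : IsComplement T H) :
    InjOn (QuotientGroup.mk : G → G ⧸ H) T :=
  injOn_iff_injective.2 (isComplement_subgroup_right_iff_bijective.1 hT).1

variable [TopologicalSpace G]

theorem Subgroup.subset_closure_closure_image_of_dense {H : Subgroup G} {S : Set H}
    (hS : Dense (Subgroup.closure S : Set H)) :
    (H : Set G) ⊆ _root_.closure (Subgroup.closure ((↑) '' S : Set G)) := by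
  have : (H : Set G) ⊆ _root_.closure (H.subtype '' Subgroup.closure S) := Subtype.dense_iff.1 hS
  rwa [← Subgroup.coe_map, MonoidHom.map_closure] at this

theorem dense_closure_image_union_sdiff [IsTopologicalGroup G] {H : Subgroup G} {S : Set H}
    (hS : Dense (Subgroup.closure S : Set H)) {T : Set G} (hT : Subgroup.IsComplement T H) :
    Dense (Subgroup.closure ((↑) '' S ∪ T \ H) : Set G) := by
  set K := Subgroup.closure ((↑) '' S ∪ T \ H)
  have hHK : H ≤ K.topologicalClosure :=
    (Subgroup.subset_closure_closure_image_of_dense hS).trans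
      (closure_mono (Subgroup.closure_mono subset_union_left))
  have hTK : T ⊆ K.topologicalClosure := fun t ht => by
    by_cases htH : t ∈ H
    · exact hHK htH
    · exact K.le_topologicalClosure (Subgroup.subset_closure (Or.inr ⟨ht, htH⟩))
  rw [dense_iff_closure_eq, ← K.topologicalClosure_coe,
    Subgroup.eq_top_of_mul_eq_univ hTK hHK hT.mul_eq, Subgroup.coe_top]

section Transversal

variable [SeparatelyContinuousMul G] [T1Space G] {H : Subgroup G} {T : Set G}

theorem Subgroup.IsComplement.isClosed_and_isDiscrete (hT : IsComplement T H)
    (hH : IsOpen (H : Set G)) : IsClosed T ∧ IsDiscrete T :=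
  have := QuotientGroup.discreteTopology hH
  hT.injOn_mk.isClosed_and_isDiscrete QuotientGroup.continuous_mk

theorem isClosed_image_union_sdiff {S : Set H} (hS : IsClosed S) (hH : IsOpen (H : Set G))
    (hT : Subgroup.IsComplement T H) : IsClosed ((↑) '' S ∪ T \ H) :=
  ((H.isClosed_of_isOpen hH).isClosedEmbedding_subtypeVal.isClosedMap _ hS).union
    ((hT.isClosed_and_isDiscrete hH).1.sdiff hH)

end Transversal

theorem IsSuitable.image_union_sdiff [IsTopologicalGroup G] [T1Space G] {H : Subgroup G}
    {S : Set H} (hS : IsSuitable S) (hH : IsOpen (H : Set G)) {T : Set G}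
    (hT : Subgroup.IsComplement T H) : IsSuitable ((↑) '' S ∪ T \ H) := by
  obtain ⟨hSdisc, hScl, hSdense⟩ := hS
  have hHcl := H.isClosed_of_isOpen hH
  obtain ⟨hTcl, hTdisc⟩ := hT.isClosed_and_isDiscrete hH
  refine ⟨?_, ?_, dense_closure_image_union_sdiff hSdense hT⟩
  · rw [← isDiscrete_iff_discreteTopology]
    exact IsDiscrete.union_of_isClopen ⟨hHcl, hH⟩
      ((isDiscrete_iff_discreteTopology.2 hSdisc).image IsInducing.subtypeVal)
      (hTdisc.mono sdiff_subset) (Subtype.coe_image_subset _ S) (fun _ h => h.2)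
  · have hunion : (↑) '' S ∪ T \ H ∪ {1} = (↑) '' (S ∪ {1}) ∪ T \ H := by
      rw [image_union, image_singleton, H.coe_one, union_right_comm]
    rw [hunion]
    exact (hHcl.isClosedEmbedding_subtypeVal.isClosedMap _ hScl).union (hTcl.sdiff hH)

end Group

/-- If an open subgroup `H` of a Hausdorff topological group `G` has a
(closed) suitable set, then so does `G`. -/
theorem suitable_set_of_open_subgroup
    {G : Type*} [Group G] [TopologicalSpace G] [IsTopologicalGroup G] [T2Space G]
    (H : Subgroup G) (hHopen : IsOpen (H : Set G)) :
    ((∃ S : Set H, IsSuitable S) → ∃ S : Set G, IsSuitable S) ∧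
    ((∃ S : Set H, IsSuitable S ∧ IsClosed S) →
      ∃ S : Set G, IsSuitable S ∧ IsClosed S) := by
  obtain ⟨T, hT, -⟩ := Subgroup.exists_isComplement_left H 1
  exact ⟨fun ⟨S, hS⟩ => ⟨_, hS.image_union_sdiff hHopen hT⟩,
    fun ⟨S, hS, hScl⟩ =>
      ⟨_, hS.image_union_sdiff hHopen hT, isClosed_image_union_sdiff hScl hHopen hT⟩⟩
end

section
/- Let G be a Hausdorff topological group that is left precompact but not pseudocompact, and let P be a countable dense subgroup of G. Then there exists a subset L of P such that L is closed in G, L is discrete in its subspace topology, and the subgroup of G generated by L equals P. In particular, L is a closed suitable set for G. -/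
open Pointwise

/-!
Fix an unbounded continuous `f : G → ℝ` with `f ≥ 0` and let `Hₘ ≤ P` be the subgroup
generated by `Sₘ = {x ∈ P | m ≤ f x}`, so `H₀ = P`. Density of `P` makes each `Hₘ` contain a
neighbourhood of `1` in `P`, so precompactness gives it finite index in `P`. Hence finitely
many letters `Tₘ ⊆ Sₘ` generate `Hₘ` modulo `Hₘ₊₁`, and `P = ⟨⋃ Tₖ⟩ Hₘ` for every `m`; so the
`m`-th element of an enumeration of `P` needs only finitely many further letters from `Sₘ`.
All letters chosen at stage `m` have `f ≥ m`, so the resulting set `L` meets every sublevel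
set of `f` in a finite set, which makes it closed and discrete.
-/

open Set Filter Topology

theorem isClosed_and_discreteTopology_of_finite_inter_preimage_Iic {X : Type*}
    [TopologicalSpace X] [T1Space X] {f : X → ℝ} (hf : Continuous f) {S : Set X}
    (hS : ∀ r, (S ∩ f ⁻¹' Iic r).Finite) : IsClosed S ∧ DiscreteTopology S := by
  rw [← isDiscrete_iff_discreteTopology, isClosed_and_discrete_iff]
  intro x
  have hU : f ⁻¹' Iio (f x + 1) ∈ 𝓝[≠] x :=
    mem_nhdsWithin_of_mem_nhds ((isOpen_Iio.preimage hf).mem_nhds (mem_Iio.2 (lt_add_one (f x))))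
  rw [disjoint_principal_right]
  refine mem_of_superset (nhdsNE_of_nhdsNE_sdiff_finite hU (hS (f x + 1)).to_subtype) ?_
  rintro y ⟨hy, hyS⟩ hyS'
  exact hyS ⟨hyS', (show f y < f x + 1 from hy).le⟩

theorem finite_iUnion_inter_preimage_Iic {X : Type*} {f : X → ℝ} {A : ℕ → Set X}
    (hA : ∀ m, (A m).Finite) (hAf : ∀ m, A m ⊆ f ⁻¹' Ici m) (r : ℝ) :
    ((⋃ m, A m) ∩ f ⁻¹' Iic r).Finite := by
  refine ((finite_Iic ⌊r⌋₊).biUnion fun m _ => hA m).subset ?_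
  rintro y ⟨hy, hyr⟩
  obtain ⟨m, hm⟩ := mem_iUnion.1 hy
  exact mem_biUnion (Nat.le_floor ((hAf m hm).trans hyr)) hm

namespace Subgroup

variable {G : Type*} [Group G]

theorem exists_finite_subset_of_mem_closure {S : Set G} {x : G} (hx : x ∈ closure S) :
    ∃ T ⊆ S, T.Finite ∧ x ∈ closure T := by
  induction hx using closure_induction with
  | mem y hy => exact ⟨{y}, singleton_subset_iff.2 hy, finite_singleton y, subset_closure rfl⟩
  | one => exact ⟨∅, empty_subset S, finite_empty, one_mem _⟩
  | mul y z _ _ hy hz =>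
    obtain ⟨T, hTS, hT, hyT⟩ := hy
    obtain ⟨T', hT'S, hT', hzT'⟩ := hz
    exact ⟨T ∪ T', union_subset hTS hT'S, hT.union hT',
      mul_mem (closure_mono subset_union_left hyT) (closure_mono subset_union_right hzT')⟩
  | inv y _ hy =>
    obtain ⟨T, hTS, hT, hyT⟩ := hy
    exact ⟨T, hTS, hT, inv_mem hyT⟩

theorem exists_finite_subset_of_subset_closure {A S : Set G} (hA : A.Finite)
    (hAS : A ⊆ closure S) : ∃ T ⊆ S, T.Finite ∧ A ⊆ closure T := by
  choose! T hTS hT hxT using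
    fun x (hx : x ∈ A) => exists_finite_subset_of_mem_closure (hAS hx)
  exact ⟨⋃ x ∈ A, T x, iUnion₂_subset hTS, hA.biUnion hT,
    fun x hx => closure_mono (subset_biUnion_of_mem hx) (hxT x hx)⟩

theorem exists_finite_subset_closure_subset_closure_mul {S : Set G} {H : Subgroup G}
    (hS : ((QuotientGroup.mk : G → G ⧸ H) '' closure S).Finite) :
    ∃ T ⊆ S, T.Finite ∧ (closure S : Set G) ⊆ closure T * H := by
  obtain ⟨A, hAS, hA, hAH⟩ := exists_subset_image_finite_and.1
    ⟨_, subset_rfl, hS, (subset_rfl : QuotientGroup.mk '' (closure S : Set G) ⊆ _)⟩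
  obtain ⟨T, hTS, hT, hAT⟩ := exists_finite_subset_of_subset_closure hA hAS
  refine ⟨T, hTS, hT, fun x hx => ?_⟩
  obtain ⟨a, ha, hax⟩ := hAH ⟨x, hx, rfl⟩
  exact ⟨a, hAT ha, a⁻¹ * x, QuotientGroup.eq.1 hax, mul_inv_cancel_left a x⟩

theorem exists_finite_subsets_forall_mem_closure_iUnion (S : ℕ → Set G)
    (hS : ∀ m, ((QuotientGroup.mk : G → G ⧸ closure (S (m + 1))) '' closure (S m)).Finite)
    (x : ℕ → G) (hx : ∀ m, x m ∈ closure (S 0)) :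
    ∃ A : ℕ → Set G, (∀ m, A m ⊆ S m ∧ (A m).Finite) ∧ ∀ m, x m ∈ closure (⋃ m, A m) := by
  choose T hTS hT hST using fun m => exists_finite_subset_closure_subset_closure_mul (hS m)
  set K := closure (⋃ m, T m)
  have hK : ∀ m, (closure (S 0) : Set G) ⊆ K * closure (S m) := by
    intro m
    induction m with
    | zero => exact subset_mul_right _ K.one_mem
    | succ m ih =>
      calc (closure (S 0) : Set G)
          ⊆ K * closure (S m) := ih
        _ ⊆ K * (closure (T m) * closure (S (m + 1))) := mul_subset_mul_left (hST m)
        _ ⊆ K * (K * closure (S (m + 1))) :=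
          mul_subset_mul_left (mul_subset_mul_right (closure_mono (subset_iUnion T m)))
        _ = K * closure (S (m + 1)) := by rw [← mul_assoc, coe_mul_coe K]
  choose ρ hρ h hh hρh using fun m => hK m (hx m)
  choose U hUS hU hhU using fun m => exists_finite_subset_of_mem_closure (hh m)
  refine ⟨fun m => T m ∪ U m, fun m => ⟨union_subset (hTS m) (hUS m), (hT m).union (hU m)⟩,
    fun m => ?_⟩
  rw [← hρh m]
  exact mul_mem (closure_mono (iUnion_mono fun k => subset_union_left) (hρ m))
    (closure_mono (subset_iUnion_of_subset m subset_union_right) (hhU m))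

end Subgroup

section TopologicalGroup

variable {G : Type*} [Group G] [TopologicalSpace G] [IsTopologicalGroup G]

theorem Dense.exists_nhds_one_inter_subset_closure_inter {P : Subgroup G}
    (hP : Dense (P : Set G)) {O : Set G} (hO : IsOpen O) (hO' : O.Nonempty) :
    ∃ V ∈ 𝓝 (1 : G), V ∩ P ⊆ Subgroup.closure ((P : Set G) ∩ O) := by
  obtain ⟨u, huP, huO⟩ := hP.exists_mem_open hO hO'
  refine ⟨(u * ·) ⁻¹' O, (hO.preimage (continuous_const_mul u)).mem_nhds (by simpa), ?_⟩
  rintro y ⟨hyO, hyP⟩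
  rw [← inv_mul_cancel_left u y]
  exact mul_mem (inv_mem (Subgroup.subset_closure ⟨huP, huO⟩))
    (Subgroup.subset_closure ⟨mul_mem huP hyP, hyO⟩)

theorem finite_image_mk_of_nhds_inter_subset
    (hpre : ∀ U ∈ 𝓝 (1 : G), ∃ F : Set G, F.Finite ∧ F * U = univ) {P H : Subgroup G}
    {V : Set G} (hV : V ∈ 𝓝 1) (hVH : V ∩ P ⊆ H) :
    ((QuotientGroup.mk : G → G ⧸ H) '' P).Finite := by
  obtain ⟨W, hW, hWV⟩ : ∃ W ∈ 𝓝 (1 : G), ∀ a ∈ W, ∀ b ∈ W, a⁻¹ * b ∈ V := by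
    have : (fun p : G × G => p.1⁻¹ * p.2) ⁻¹' V ∈ 𝓝 ((1, 1) : G × G) :=
      continuousAt_fst.inv.mul continuousAt_snd (by simpa)
    simpa only [nhds_prod_eq, mem_prod_self_iff, prod_subset_iff, mem_preimage] using this
  obtain ⟨F, hF, hFW⟩ := hpre W hW
  refine (hF.biUnion fun c _ =>
    Subsingleton.finite (s := QuotientGroup.mk '' (P ∩ c • W)) ?_).subset ?_
  · rintro _ ⟨a, ⟨haP, w, hw, rfl⟩, rfl⟩ _ ⟨b, ⟨hbP, w', hw', rfl⟩, rfl⟩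
    refine QuotientGroup.eq.2 (hVH ⟨?_, P.mul_mem (P.inv_mem haP) hbP⟩)
    simpa [mul_assoc] using hWV w hw w' hw'
  · rintro _ ⟨p, hp, rfl⟩
    obtain ⟨c, hc, w, hw, rfl⟩ : p ∈ F * W := hFW ▸ mem_univ p
    exact mem_biUnion hc ⟨_, ⟨hp, w, hw, rfl⟩, rfl⟩

theorem finite_image_mk_closure_inter_preimage_Ici
    (hpre : ∀ U ∈ 𝓝 (1 : G), ∃ F : Set G, F.Finite ∧ F * U = univ) {P : Subgroup G}
    (hP : Dense (P : Set G)) {f : G → ℝ} (hf : Continuous f) (hunb : ∀ M, ∃ x, M < f x)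
    (r : ℝ) :
    ((QuotientGroup.mk : G → G ⧸ Subgroup.closure ((P : Set G) ∩ f ⁻¹' Ici r)) '' P).Finite := by
  obtain ⟨V, hV, hVP⟩ := hP.exists_nhds_one_inter_subset_closure_inter
    (isOpen_Ioi.preimage hf) (hunb r)
  exact finite_image_mk_of_nhds_inter_subset hpre hV (hVP.trans (Subgroup.closure_mono
    (inter_subset_inter_right _ (preimage_mono Ioi_subset_Ici_self))))

end TopologicalGroup

/-- If `G` is a Hausdorff topological group which is left precompact but not
pseudocompact, and `P` is a countable dense subgroup of `G`, then there is a
subset `L ⊆ P` which is closed in `G`, discrete in its subspace topology, and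
generates exactly `P`. In particular, `L` is a closed suitable set for `G`. -/
theorem exists_closed_discrete_generating_set_of_countable_dense_subgroup
    {G : Type*} [Group G] [TopologicalSpace G] [IsTopologicalGroup G] [T2Space G]
    (hpre : ∀ U ∈ nhds (1 : G), ∃ F : Set G, F.Finite ∧ F * U = Set.univ)
    (hnpc : ¬ ∀ f : G → ℝ, Continuous f → ∃ M : ℝ, ∀ x : G, |f x| ≤ M)
    (P : Subgroup G) (hPc : (P : Set G).Countable) (hPd : Dense (P : Set G)) :
    ∃ L : Set G, L ⊆ (P : Set G) ∧ IsClosed L ∧ DiscreteTopology L ∧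
      Subgroup.closure L = P := by
  push Not at hnpc
  obtain ⟨f₀, hf₀, hunb⟩ := hnpc
  set f : G → ℝ := fun x => |f₀ x|
  set S : ℕ → Set G := fun m => (P : Set G) ∩ f ⁻¹' Ici m
  have hS0 : Subgroup.closure (S 0) = P := by
    rw [show S 0 = P by ext; simp [S, f]]
    exact Subgroup.closure_eq P
  have hS : ∀ m, ((QuotientGroup.mk : G → G ⧸ Subgroup.closure (S (m + 1))) ''
      Subgroup.closure (S m)).Finite := fun m =>
    (finite_image_mk_closure_inter_preimage_Ici hpre hPd hf₀.abs hunb _).subset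
      (image_mono ((Subgroup.closure_le P).2 inter_subset_left))
  obtain ⟨x, hx⟩ := hPc.exists_eq_range ⟨1, P.one_mem⟩
  obtain ⟨A, hA, hxA⟩ := Subgroup.exists_finite_subsets_forall_mem_closure_iUnion S hS x
    fun m => by rw [hS0, ← SetLike.mem_coe, hx]; exact mem_range_self m
  have hLP : (⋃ m, A m) ⊆ P := iUnion_subset fun m => (hA m).1.trans inter_subset_left
  obtain ⟨hclosed, hdiscrete⟩ := isClosed_and_discreteTopology_of_finite_inter_preimage_Iic
    hf₀.abs (finite_iUnion_inter_preimage_Iic (fun m => (hA m).2)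
      fun m => (hA m).1.trans inter_subset_right)
  refine ⟨⋃ m, A m, hLP, hclosed, hdiscrete,
    le_antisymm ((Subgroup.closure_le P).2 hLP) fun p hp => ?_⟩
  obtain ⟨m, rfl⟩ : p ∈ range x := hx ▸ hp
  exact hxA m
end

section
/- Every compact metrizable topological group G has a suitable set; that is, there exists a subset S of G such that S is discrete in its subspace topology, S ∪ {1} is closed in G, and the subgroup generated by S is dense in G. -/
/-!
Fix a decreasing basis `U₀ ⊇ U₁ ⊇ ⋯` of neighbourhoods of `1`. By compactness `G` is covered by
finitely many translates `U₀ f`, and each `Uₙ` by finitely many translates `Uₙ₊₁ f` with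
`f ∈ Uₙ`. Only finitely many of all these points `f` lie outside any given `Uₙ`, so their set
`S` converges to `1`, and inductively `G = Uₙ ⟨S⟩` for every `n`, so `⟨S⟩` is dense. In a
Hausdorff space a set converging to a point `p ∉ S` is discrete, and it is closed once `p` is
added.
-/

open Set Filter Topology Pointwise

section ConvergentSet

variable {X : Type*} [TopologicalSpace X] [T2Space X] {S : Set X} {p : X}

theorem isClosed_insert_of_forall_finite_diff (h : ∀ V ∈ 𝓝 p, (S \ V).Finite) :
    IsClosed (insert p S) := by
  have hval : Tendsto ((↑) : S → X) cofinite (𝓝 p) := fun V hV => by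
    rw [mem_map, mem_cofinite]
    exact ((h V hV).preimage Subtype.val_injective.injOn).subset fun s hs => ⟨s.2, hs⟩
  simpa using hval.isCompact_insert_range_of_cofinite.isClosed

theorem discreteTopology_of_forall_finite_diff (hp : p ∉ S) (h : ∀ V ∈ 𝓝 p, (S \ V).Finite) :
    DiscreteTopology S := by
  refine discreteTopology_iff_isOpen_singleton.mpr fun s => ?_
  obtain ⟨U, V, hU, hV, hUV⟩ := t2_separation_nhds (ne_of_mem_of_not_mem s.2 hp)
  refine isOpen_singleton_of_finite_mem_nhds s (continuousAt_subtype_val.preimage_mem_nhds hU) ?_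
  refine ((h V hV).preimage Subtype.val_injective.injOn).subset fun t ht => ?_
  exact ⟨t.2, hUV.notMem_of_mem_left ht⟩

end ConvergentSet

section CompactGroup

variable {G : Type*} [Group G] [TopologicalSpace G] [IsTopologicalGroup G]

theorem dense_of_forall_nhds_one_subset_mul {T : Set G} (h : ∀ V ∈ 𝓝 (1 : G), univ ⊆ V * T) :
    Dense T := fun x => by
  refine mem_closure_iff_nhds_one.mpr fun V hV => ?_
  obtain ⟨u, hu, y, hy, rfl⟩ := h V⁻¹ (inv_mem_nhds_one G hV) (mem_univ x)
  exact ⟨y, hy, show y / (u * y) ∈ V by rwa [div_mul_cancel_right]⟩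

theorem exists_finite_subset_subset_mul_of_mem_nhds_one [CompactSpace G] (A : Set G)
    {V : Set G} (hV : V ∈ 𝓝 (1 : G)) : ∃ F ⊆ A, F.Finite ∧ A ⊆ V * F := by
  let := IsTopologicalGroup.rightUniformSpace G
  have hA : TotallyBounded A := isCompact_univ.totallyBounded.subset (subset_univ A)
  obtain ⟨F, hFA, hF, hcover⟩ := totallyBounded_iff_subset.mp hA _
    (preimage_mem_comap (inv_mem_nhds_one G hV))
  refine ⟨F, hFA, hF, fun a ha => ?_⟩
  obtain ⟨y, hy, hay⟩ := mem_iUnion₂.mp (hcover ha)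
  exact ⟨a * y⁻¹, by simpa using hay, y, hy, inv_mul_cancel_right a y⟩

theorem exists_forall_finite_diff_nhds_one_and_dense_closure [CompactSpace G]
    [(𝓝 (1 : G)).IsCountablyGenerated] :
    ∃ S : Set G, (∀ V ∈ 𝓝 (1 : G), (S \ V).Finite) ∧ Dense (Subgroup.closure S : Set G) := by
  obtain ⟨U, hU⟩ := (𝓝 (1 : G)).exists_antitone_basis
  obtain ⟨F₀, -, hF₀, hcover₀⟩ := exists_finite_subset_subset_mul_of_mem_nhds_one univ (hU.mem 0)
  choose F hFU hF hcover using fun n =>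
    exists_finite_subset_subset_mul_of_mem_nhds_one (U n) (hU.mem (n + 1))
  refine ⟨F₀ ∪ ⋃ n, F n, fun V hV => ?_, dense_of_forall_nhds_one_subset_mul fun V hV => ?_⟩
  · obtain ⟨n, -, hnV⟩ := hU.toHasBasis.mem_iff.mp hV
    refine (hF₀.union ((finite_lt_nat n).biUnion fun m _ => hF m)).subset ?_
    rintro x ⟨hx | hx, hxV⟩
    · exact Or.inl hx
    · obtain ⟨m, hm⟩ := mem_iUnion.mp hx
      refine Or.inr (mem_iUnion₂.mpr ⟨m, (lt_of_not_ge fun hnm => ?_ : m < n), hm⟩)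
      exact hxV (hnV (hU.antitone hnm (hFU m hm)))
  · set H := Subgroup.closure (F₀ ∪ ⋃ n, F n)
    have hF₀H : F₀ ⊆ H := subset_union_left.trans Subgroup.subset_closure
    have hFH : ∀ n, F n * (H : Set G) ⊆ H := fun n =>
      (mul_subset_mul_right ((subset_iUnion F n).trans
        (subset_union_right.trans Subgroup.subset_closure))).trans (coe_mul_coe H).subset
    have hcoverH : ∀ n, univ ⊆ U n * (H : Set G) := by
      intro n
      induction n with
      | zero => exact hcover₀.trans (mul_subset_mul_left hF₀H)
      | succ n ih =>
        calc univ ⊆ U n * (H : Set G) := ih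
          _ ⊆ U (n + 1) * F n * H := mul_subset_mul_right (hcover n)
          _ = U (n + 1) * (F n * H) := mul_assoc _ _ _
          _ ⊆ U (n + 1) * H := mul_subset_mul_left (hFH n)
    obtain ⟨n, -, hnV⟩ := hU.toHasBasis.mem_iff.mp hV
    exact (hcoverH n).trans (mul_subset_mul_right hnV)

end CompactGroup

/-- Every compact metrizable topological group has a suitable set. -/
theorem compact_metrizable_group_has_suitable_set
    {G : Type*} [Group G] [TopologicalSpace G] [IsTopologicalGroup G]
    [CompactSpace G] [TopologicalSpace.MetrizableSpace G] :
    ∃ S : Set G, IsSuitable S := by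
  obtain ⟨S, hS, hdense⟩ := exists_forall_finite_diff_nhds_one_and_dense_closure (G := G)
  have hS' : ∀ V ∈ 𝓝 (1 : G), ((S \ {1}) \ V).Finite := fun V hV =>
    (hS V hV).subset (sdiff_subset_sdiff_left sdiff_subset)
  refine ⟨S \ {1}, discreteTopology_of_forall_finite_diff (fun h => h.2 rfl) hS', ?_, ?_⟩
  · rw [union_singleton]
    exact isClosed_insert_of_forall_finite_diff hS'
  · rwa [Subgroup.closure_sdiff_one]
end

section
/- Let G be a separable left precompact Hausdorff topological group in which {1} is a Gδ-set (i.e., G has countable pseudocharacter), and let P be a countable dense subgroup of G. Then there exists a subset L of P such that L is discrete in its subspace topology, L is closed in G ∖ {1}, and the subgroup generated by L equals P. In particular, L is a suitable set for both P and G. -/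
/-!
Choose closed neighbourhoods `V 0 ⊇ V 1 ⊇ ⋯` of `1` with intersection `{1}` and, by
precompactness and density of `P`, finite sets `F n ⊆ P` with `F n * V n = G`; enumerate
`P = {e 0, e 1, …}`. Writing each element of `F (n + 1) ∪ {e n}` as `f * v` with `f ∈ F n` and
`v ∈ V n`, the set `F 0` together with all these corrections `v` generates `P`, and only finitely
many of its elements lie outside any given `V m`. A set accumulating only at `1` in this sense is
discrete and closed in `G \ {1}`.
-/

open Set Filter Topology Pointwise

theorem IsGδ.exists_antitone_isClosed_nhds_iInter_eq {X : Type*} [TopologicalSpace X]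
    [RegularSpace X] {a : X} (h : IsGδ ({a} : Set X)) :
    ∃ V : ℕ → Set X, Antitone V ∧ (∀ n, V n ∈ 𝓝 a) ∧ (∀ n, IsClosed (V n)) ∧
      ⋂ n, V n = {a} := by
  obtain ⟨U, hUopen, hUeq⟩ := h.eq_iInter_nat
  have haU : ∀ n, a ∈ U n := fun n => mem_iInter.1 (hUeq ▸ mem_singleton a) n
  choose C hCnhds hCclosed hCU using fun n =>
    exists_mem_nhds_isClosed_subset ((hUopen n).mem_nhds (haU n))
  have hVnhds : ∀ n, ⋂ i ∈ Iic n, C i ∈ 𝓝 a := fun n =>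
    (biInter_mem (finite_Iic n)).2 fun i _ => hCnhds i
  refine ⟨fun n => ⋂ i ∈ Iic n, C i,
    fun m n hmn => biInter_subset_biInter_left (Iic_subset_Iic.2 hmn), hVnhds,
    fun n => isClosed_biInter fun i _ => hCclosed i, ?_⟩
  refine subset_antisymm ?_
    (singleton_subset_iff.2 (mem_iInter.2 fun n => mem_of_mem_nhds (hVnhds n)))
  rw [hUeq]
  exact iInter_mono fun n => (biInter_subset_of_mem (mem_Iic.2 le_rfl)).trans (hCU n)

section AccumulatingAt

variable {X : Type*} [TopologicalSpace X] [T1Space X] {a : X} {L : Set X} {V : ℕ → Set X}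

theorem exists_isOpen_inter_subset_singleton_of_finite_diff (hV : ∀ n, IsClosed (V n))
    (hVa : ⋂ n, V n ⊆ {a}) (hfin : ∀ n, (L \ V n).Finite) {x : X} (hx : x ≠ a) :
    ∃ N : Set X, IsOpen N ∧ x ∈ N ∧ N ∩ L ⊆ {x} := by
  obtain ⟨m, hm⟩ : ∃ m, x ∉ V m := by
    by_contra! h
    exact hx (hVa (mem_iInter.2 h))
  refine ⟨(V m)ᶜ \ ((L \ V m) \ {x}), (hV m).isOpen_compl.sdiff (hfin m).sdiff.isClosed,
    ⟨hm, fun h => h.2 rfl⟩, ?_⟩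
  rintro y ⟨⟨hyV, hyT⟩, hyL⟩
  by_contra hyx
  exact hyT ⟨⟨hyL, hyV⟩, hyx⟩

theorem discreteTopology_of_finite_diff (hV : ∀ n, IsClosed (V n)) (hVa : ⋂ n, V n ⊆ {a})
    (hfin : ∀ n, (L \ V n).Finite) (haL : a ∉ L) : DiscreteTopology L := by
  refine discreteTopology_subtype_iff'.2 fun x hx => ?_
  obtain ⟨N, hN, hxN, hNL⟩ :=
    exists_isOpen_inter_subset_singleton_of_finite_diff hV hVa hfin (ne_of_mem_of_not_mem hx haL)
  exact ⟨N, hN, subset_antisymm hNL (singleton_subset_iff.2 ⟨hxN, hx⟩)⟩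

theorem isClosed_preimage_val_compl_singleton_of_finite_diff (hV : ∀ n, IsClosed (V n))
    (hVa : ⋂ n, V n ⊆ {a}) (hfin : ∀ n, (L \ V n).Finite) :
    IsClosed (Subtype.val ⁻¹' L : Set ({a}ᶜ : Set X)) := by
  refine isOpen_compl_iff.1 (isOpen_iff_forall_mem_open.2 fun y hy => ?_)
  obtain ⟨N, hN, hyN, hNL⟩ := exists_isOpen_inter_subset_singleton_of_finite_diff hV hVa hfin y.2
  refine ⟨Subtype.val ⁻¹' N, fun z hzN hzL => hy ?_, hN.preimage continuous_subtype_val, hyN⟩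
  exact Subtype.ext (mem_singleton_iff.1 (hNL ⟨hzN, hzL⟩)) ▸ hzL

end AccumulatingAt

section Correction

variable {G : Type*} [Group G]

theorem subset_mul_inter_inv_mul {X Y V : Set G} (h : X ⊆ Y * V) :
    X ⊆ Y * ((Y⁻¹ * X) ∩ V) := by
  intro x hx
  obtain ⟨y, hy, v, hv, rfl⟩ := h hx
  refine ⟨y, hy, v, ⟨⟨y⁻¹, inv_mem_inv.2 hy, y * v, hx, ?_⟩, hv⟩, rfl⟩
  group

theorem Dense.mul_eq_univ [TopologicalSpace G] [IsTopologicalGroup G] {D U : Set G}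
    (hD : Dense D) (hU : IsOpen U) (hne : U.Nonempty) : D * U = univ := by
  refine eq_univ_of_forall fun x => ?_
  obtain ⟨u, hu⟩ := hne
  obtain ⟨d, ⟨w, hw, rfl⟩, hd⟩ := hD.inter_open_nonempty ((x * ·) '' U⁻¹)
    ((isOpenMap_mul_left x) _ hU.inv) ⟨x * u⁻¹, u⁻¹, inv_mem_inv.2 hu, rfl⟩
  exact ⟨x * w, hd, w⁻¹, hw, by group⟩

theorem exists_finite_subset_mul_eq_univ [TopologicalSpace G] [IsTopologicalGroup G]
    (hpre : ∀ U ∈ 𝓝 (1 : G), ∃ F : Set G, F.Finite ∧ F * U = univ) {D : Set G} (hD : Dense D)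
    {W : Set G} (hW : W ∈ 𝓝 1) : ∃ F ⊆ D, F.Finite ∧ F * W = univ := by
  obtain ⟨S, hSopen, hS1, hSW⟩ := exists_open_nhds_one_mul_subset hW
  obtain ⟨F₀, hF₀, hcov⟩ := hpre S (hSopen.mem_nhds hS1)
  have hF₀DS : ∀ f ∈ F₀, f ∈ D * S := fun f _ => hD.mul_eq_univ hSopen ⟨1, hS1⟩ ▸ mem_univ f
  choose! p hpD q hqS hpq using hF₀DS
  refine ⟨p '' F₀, image_subset_iff.2 hpD, hF₀.image p, eq_univ_of_forall fun x => ?_⟩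
  obtain ⟨f, hf, s, hs, rfl⟩ := hcov ▸ mem_univ x
  refine ⟨p f, mem_image_of_mem p hf, q f * s, hSW (mul_mem_mul (hqS f hf) hs), ?_⟩
  change p f * (q f * s) = f * s
  rw [← mul_assoc, show p f * q f = f from hpq f hf]

def correctionSet (F V : ℕ → Set G) (e : ℕ → G) : Set G :=
  F 0 ∪ ⋃ n, ((F n)⁻¹ * insert (e n) (F (n + 1))) ∩ V n

variable {F V : ℕ → Set G} {e : ℕ → G}

theorem correctionSet_subset {P : Subgroup G} (hF : ∀ n, F n ⊆ P) (he : ∀ n, e n ∈ P) :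
    correctionSet F V e ⊆ P := by
  rintro x (hx | hx)
  · exact hF 0 hx
  obtain ⟨n, ⟨y, hy, z, hz, rfl⟩, -⟩ := mem_iUnion.1 hx
  refine mul_mem (inv_mem_iff.1 (hF n hy)) ?_
  rcases hz with rfl | hz
  exacts [he n, hF (n + 1) hz]

theorem finite_correctionSet_diff (hF : ∀ n, (F n).Finite) (hV : Antitone V) (m : ℕ) :
    (correctionSet F V e \ V m).Finite := by
  refine ((hF 0).union ((finite_Iio m).biUnion fun n _ =>
    (hF n).inv.mul ((hF (n + 1)).insert (e n)))).subset ?_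
  rintro x ⟨hx | hx, hxV⟩
  · exact Or.inl hx
  obtain ⟨n, hxn, hxVn⟩ := mem_iUnion.1 hx
  have hnm : n < m := by
    by_contra! hmn
    exact hxV (hV hmn hxVn)
  exact Or.inr (mem_biUnion hnm hxn)

theorem range_subset_closure_correctionSet (hcov : ∀ n, F n * V n = univ) :
    range e ⊆ Subgroup.closure (correctionSet F V e) := by
  set H := Subgroup.closure (correctionSet F V e)
  have hstep : ∀ n, F n ⊆ H → insert (e n) (F (n + 1)) ⊆ H := by
    intro n hn
    refine (subset_mul_inter_inv_mul ((hcov n).symm ▸ subset_univ _)).trans ?_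
    rintro _ ⟨y, hy, v, hv, rfl⟩
    exact mul_mem (hn hy) (Subgroup.subset_closure (Or.inr (mem_iUnion.2 ⟨n, hv⟩)))
  have hF : ∀ n, F n ⊆ H := by
    intro n
    induction n with
    | zero => exact subset_union_left.trans Subgroup.subset_closure
    | succ n ih => exact (subset_insert _ _).trans (hstep n ih)
  rintro _ ⟨n, rfl⟩
  exact hstep n (hF n) (mem_insert _ _)

end Correction

theorem exists_suitable_set_in_countable_dense_subgroup_general
    {G : Type*} [Group G] [TopologicalSpace G] [IsTopologicalGroup G] [T2Space G]
    (hpre : ∀ U ∈ nhds (1 : G), ∃ F : Set G, F.Finite ∧ F * U = Set.univ)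
    (hGδ : IsGδ ({1} : Set G))
    (P : Subgroup G) (hPc : (P : Set G).Countable) (hPd : Dense (P : Set G)) :
    ∃ L : Set G, L ⊆ (P : Set G) ∧ DiscreteTopology L ∧
      IsClosed (Subtype.val ⁻¹' L : Set (({1}ᶜ : Set G))) ∧
      Subgroup.closure L = P := by
  obtain ⟨V, hVanti, hVnhds, hVclosed, hVinter⟩ := hGδ.exists_antitone_isClosed_nhds_iInter_eq
  choose F hFP hFfin hFcov using fun n => exists_finite_subset_mul_eq_univ hpre hPd (hVnhds n)
  obtain ⟨e, he⟩ := hPc.exists_eq_range ⟨1, P.one_mem⟩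
  set K := correctionSet F V e
  have hKP : K ⊆ P := correctionSet_subset hFP fun n => he.ge (mem_range_self n)
  have hfin : ∀ m, ((K \ {1}) \ V m).Finite := fun m =>
    (finite_correctionSet_diff hFfin hVanti m).subset (sdiff_subset_sdiff_left sdiff_subset)
  refine ⟨K \ {1}, sdiff_subset.trans hKP,
    discreteTopology_of_finite_diff hVclosed hVinter.le hfin fun h => h.2 rfl,
    isClosed_preimage_val_compl_singleton_of_finite_diff hVclosed hVinter.le hfin, ?_⟩
  rw [Subgroup.closure_sdiff_one]
  exact le_antisymm ((Subgroup.closure_le P).2 hKP) fun x hx =>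
    range_subset_closure_correctionSet hFcov (he ▸ hx)

/-- Let `G` be a separable left precompact Hausdorff topological group in which
`{1}` is a Gδ-set, and let `P` be a countable dense subgroup of `G`. Then there
exists `L ⊆ P` which is discrete in its subspace topology, closed in `G \ {1}`,
and generates exactly `P`. -/
theorem exists_suitable_set_in_countable_dense_subgroup
    {G : Type*} [Group G] [TopologicalSpace G] [IsTopologicalGroup G] [T2Space G]
    [TopologicalSpace.SeparableSpace G]
    (hpre : ∀ U ∈ nhds (1 : G), ∃ F : Set G, F.Finite ∧ F * U = Set.univ)
    (hGδ : IsGδ ({1} : Set G))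
    (P : Subgroup G) (hPc : (P : Set G).Countable) (hPd : Dense (P : Set G)) :
    ∃ L : Set G, L ⊆ (P : Set G) ∧ DiscreteTopology L ∧
      IsClosed (Subtype.val ⁻¹' L : Set (({1}ᶜ : Set G))) ∧
      Subgroup.closure L = P :=
  exists_suitable_set_in_countable_dense_subgroup_general hpre hGδ P hPc hPd
end

section
/- Every separable metrizable topological group G has a suitable set; that is, there exists a subset S of G such that S is discrete in its subspace topology, S ∪ {1} is closed in G, and the subgroup generated by S is dense in G. -/
/-!
Fix a compatible metric and write `‖g‖ = dist g 1`. Call `s, t` relatively separated when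
`min ‖s‖ ‖t‖ ≤ 2 max ‖s⁻¹t‖ ‖t⁻¹s‖`. A pairwise relatively separated set `S ∌ 1` has no
accumulation point other than `1`: two points of `S` close to `x ≠ 1` have norm about `‖x‖`,
while `s⁻¹t` and `t⁻¹s` are close to `1`. Such a set is discrete and `S ∪ {1}` is closed.

To make `⟨S⟩` dense, enumerate a dense sequence `dₙ` and grow finite separated sets `Fₙ` with
`dₙ ∈ ⟨Fₙ₊₁⟩`. Given a finite `F ∌ 1` and `u`, repeatedly replace `u` by `s⁻¹u` for some `s ∈ F`
with `2‖s⁻¹u‖ < ‖u‖`. The norm halves at each step, and it cannot drop below the radius of a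
neighbourhood `V` of `1` with `V V⁻¹ ∩ F = ∅`, so this stops at `u = g v` with `g ∈ ⟨F⟩` and
`‖v‖ ≤ 2‖s⁻¹v‖` for all `s ∈ F`; adding `v` to `F` (unless `v = 1`) keeps `F` separated.
-/

open Filter Set Topology

theorem not_accPt_of_subsingleton_inter {X : Type*} [TopologicalSpace X] [T1Space X] {x : X}
    {U C : Set X} (hU : U ∈ 𝓝 x) (hUC : (U ∩ C).Subsingleton) : ¬AccPt x (𝓟 C) := by
  intro hx
  have hxU : AccPt x (𝓟 (U ∩ C)) := by
    rw [accPt_iff_frequently] at hx ⊢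
    exact (hx.and_eventually hU).mono fun y ⟨⟨hyx, hyC⟩, hyU⟩ => ⟨hyx, hyU, hyC⟩
  exact Set.Infinite.of_accPt hxU hUC.finite

theorem isSuitable_of_derivedSet_subset {G : Type*} [Group G] [TopologicalSpace G] [T1Space G]
    {S : Set G} (h1 : (1 : G) ∉ S) (hS : derivedSet S ⊆ {1})
    (hdense : Dense (Subgroup.closure S : Set G)) : IsSuitable S := by
  refine ⟨discreteTopology_of_noAccPts fun x hx hacc => h1 (hS hacc ▸ hx), ?_, hdense⟩
  rw [← closure_subset_iff_isClosed, closure_union, closure_singleton,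
    closure_eq_self_union_derivedSet]
  exact union_subset (union_subset subset_union_left (hS.trans subset_union_right))
    subset_union_right

section MetricGroup

variable {G : Type*} [Group G] [MetricSpace G]

def RelSeparated (s t : G) : Prop :=
  min (dist s 1) (dist t 1) ≤ 2 * max (dist (s⁻¹ * t) 1) (dist (t⁻¹ * s) 1)

theorem RelSeparated.symm {s t : G} (h : RelSeparated s t) : RelSeparated t s := by
  rwa [RelSeparated, min_comm, max_comm]

variable [IsTopologicalGroup G]

theorem exists_mem_nhds_inter_subsingleton_of_pairwise_relSeparated {S : Set G}
    (hS : S.Pairwise RelSeparated) {x : G} (hx : x ≠ 1) : ∃ U ∈ 𝓝 x, (U ∩ S).Subsingleton := by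
  have hr : 0 < dist x 1 := dist_pos.2 hx
  have hquot : Tendsto (fun p : G × G => p.1⁻¹ * p.2) (𝓝 x ×ˢ 𝓝 x) (𝓝 1) := by
    have hcont : Continuous fun p : G × G => p.1⁻¹ * p.2 := by fun_prop
    simpa [nhds_prod_eq] using hcont.tendsto (x, x)
  obtain ⟨W, hW, hWW⟩ :=
    mem_prod_self_iff.1 (hquot (Metric.ball_mem_nhds 1 (by positivity : 0 < dist x 1 / 4)))
  refine ⟨W ∩ Metric.ball x (dist x 1 / 2),
    inter_mem hW (Metric.ball_mem_nhds x (by positivity)), ?_⟩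
  rintro s ⟨⟨hsW, hsx⟩, hsS⟩ t ⟨⟨htW, htx⟩, htS⟩
  by_contra hst
  rw [Metric.mem_ball] at hsx htx
  have hmin : dist x 1 / 2 < min (dist s 1) (dist t 1) :=
    lt_min (by linarith [dist_triangle_left x 1 s]) (by linarith [dist_triangle_left x 1 t])
  have hmax : max (dist (s⁻¹ * t) 1) (dist (t⁻¹ * s) 1) < dist x 1 / 4 :=
    max_lt (hWW (mk_mem_prod hsW htW)) (hWW (mk_mem_prod htW hsW))
  have hsep : RelSeparated s t := hS hsS htS hst
  rw [RelSeparated] at hsep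
  linarith

theorem derivedSet_subset_one_of_pairwise_relSeparated {S : Set G}
    (hS : S.Pairwise RelSeparated) : derivedSet S ⊆ {1} := fun x hx => by
  by_contra hx1
  obtain ⟨U, hU, hUS⟩ := exists_mem_nhds_inter_subsingleton_of_pairwise_relSeparated hS hx1
  exact not_accPt_of_subsingleton_inter hU hUS hx

theorem exists_mul_forall_dist_le {F : Set G} (hF : F.Finite) (h1 : (1 : G) ∉ F) (u : G) :
    ∃ g ∈ Subgroup.closure F, ∃ v, u = g * v ∧ ∀ s ∈ F, dist v 1 ≤ 2 * dist (s⁻¹ * v) 1 := by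
  obtain ⟨V, hV, hVF⟩ := exists_nhds_split_inv (hF.isClosed.isOpen_compl.mem_nhds h1)
  obtain ⟨δ, hδ, hball⟩ := Metric.mem_nhds_iff.1 hV
  suffices ∀ k : ℕ, ∀ u : G, dist u 1 < 2 ^ k * δ → ∃ g ∈ Subgroup.closure F, ∃ v,
      u = g * v ∧ ∀ s ∈ F, dist v 1 ≤ 2 * dist (s⁻¹ * v) 1 by
    obtain ⟨k, hk⟩ := pow_unbounded_of_one_lt (dist u 1 / δ) one_lt_two
    exact this k u (by rwa [div_lt_iff₀ hδ] at hk)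
  intro k
  induction k with
  | zero =>
    intro u hu
    refine ⟨1, one_mem _, u, (one_mul u).symm, fun s hs => ?_⟩
    by_contra! hlt
    rw [pow_zero, one_mul] at hu
    have hs' := hVF u (hball hu) (s⁻¹ * u) (hball (by rw [Metric.mem_ball]; linarith))
    simp [div_eq_mul_inv, hs] at hs'
  | succ k ih =>
    intro u hu
    by_cases hred : ∃ s ∈ F, 2 * dist (s⁻¹ * u) 1 < dist u 1
    · obtain ⟨s, hs, hlt⟩ := hred
      obtain ⟨g, hg, v, huv, hv⟩ := ih (s⁻¹ * u) (by rw [pow_succ] at hu; linarith)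
      refine ⟨s * g, mul_mem (Subgroup.subset_closure hs) hg, v, ?_, hv⟩
      rw [mul_assoc, ← huv, mul_inv_cancel_left]
    · push Not at hred
      exact ⟨1, one_mem _, u, (one_mul u).symm, hred⟩

theorem exists_superset_pairwise_relSeparated {F : Set G} (hF : F.Finite) (h1 : (1 : G) ∉ F)
    (hsep : F.Pairwise RelSeparated) (u : G) :
    ∃ F' ⊇ F, (F'.Finite ∧ (1 : G) ∉ F' ∧ F'.Pairwise RelSeparated) ∧
      u ∈ Subgroup.closure F' := by
  obtain ⟨g, hg, v, rfl, hv⟩ := exists_mul_forall_dist_le hF h1 u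
  rcases eq_or_ne v 1 with rfl | hv1
  · exact ⟨F, subset_rfl, ⟨hF, h1, hsep⟩, by rwa [mul_one]⟩
  refine ⟨insert v F, subset_insert v F, ⟨hF.insert v, ?_, hsep.insert fun s hs _ => ?_⟩, ?_⟩
  · rintro (h | h)
    exacts [hv1 h.symm, h1 h]
  · have hvs : RelSeparated v s :=
      (min_le_left _ _).trans ((hv s hs).trans (by gcongr; exact le_max_right _ _))
    exact ⟨hvs, hvs.symm⟩
  · exact mul_mem (Subgroup.closure_mono (subset_insert v F) hg)
      (Subgroup.subset_closure (mem_insert v F))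

theorem exists_pairwise_relSeparated_dense [TopologicalSpace.SeparableSpace G] :
    ∃ S : Set G, (1 : G) ∉ S ∧ S.Pairwise RelSeparated ∧ Dense (Subgroup.closure S : Set G) := by
  let Good := {F : Set G // F.Finite ∧ (1 : G) ∉ F ∧ F.Pairwise RelSeparated}
  have step (F : Good) (u : G) : ∃ F' : Good, F.1 ⊆ F'.1 ∧ u ∈ Subgroup.closure F'.1 :=
    let ⟨F', hFF', hF', hu⟩ := exists_superset_pairwise_relSeparated F.2.1 F.2.2.1 F.2.2.2 u
    ⟨⟨F', hF'⟩, hFF', hu⟩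
  choose next hsub hmem using step
  have : Nonempty G := ⟨1⟩
  let d := TopologicalSpace.denseSeq G
  let F : ℕ → Good := fun n =>
    Nat.rec ⟨∅, finite_empty, notMem_empty 1, pairwise_empty _⟩ (fun n F => next F (d n)) n
  have hmono : Monotone fun n => (F n).1 := monotone_nat_of_le_succ fun n => hsub _ _
  refine ⟨⋃ n, (F n).1, ?_, (pairwise_iUnion hmono.directed_le).2 fun n => (F n).2.2.2, ?_⟩
  · simpa only [mem_iUnion, not_exists] using fun n => (F n).2.2.1
  · refine (TopologicalSpace.denseRange_denseSeq G).mono ?_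
    rintro _ ⟨n, rfl⟩
    exact Subgroup.closure_mono (subset_iUnion (fun n => (F n).1) (n + 1)) (hmem (F n) (d n))

end MetricGroup

/-- Every separable metrizable topological group has a suitable set. -/
theorem separable_metrizable_group_has_suitable_set
    {G : Type*} [Group G] [TopologicalSpace G] [IsTopologicalGroup G]
    [TopologicalSpace.SeparableSpace G] [TopologicalSpace.MetrizableSpace G] :
    ∃ S : Set G, IsSuitable S := by
  let _ : MetricSpace G := TopologicalSpace.metrizableSpaceMetric G
  obtain ⟨S, h1, hsep, hdense⟩ := exists_pairwise_relSeparated_dense (G := G)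
  exact ⟨S, isSuitable_of_derivedSet_subset h1
    (derivedSet_subset_one_of_pairwise_relSeparated hsep) hdense⟩
end

section
/- For all complex numbers a, b, c with |a| < 1, |b| < 1 and |c| < 1, the Möbius addition satisfies the left gyroassociative law: a ⊕ (b ⊕ c) = (a ⊕ b) ⊕ (((1 + a·conj(b))/(1 + conj(a)·b))·c), where x ⊕ y = (x + y)/(1 + conj(x)·y). -/
/-!
Writing `p = 1 + conj a * b`, the gyration factor is `conj p / p`, and it exactly cancels the
denominator `p` of `a ⊕ b`. Both sides of the law therefore reduce to the same fraction
`(a + b + c + a * conj b * c) / (1 + conj a * b + conj a * c + conj b * c)`.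
-/

/-- Möbius addition on the complex plane. -/
noncomputable def mobiusAdd (x y : ℂ) : ℂ := (x + y) / (1 + (starRingEnd ℂ) x * y)

open ComplexConjugate

lemma one_add_conj_mul_ne_zero {x y : ℂ} (hx : ‖x‖ < 1) (hy : ‖y‖ < 1) :
    1 + conj x * y ≠ 0 := by
  intro h
  have hnorm : ‖conj x * y‖ = 1 := by
    rw [eq_neg_of_add_eq_zero_right h, norm_neg, norm_one]
  rw [norm_mul, Complex.norm_conj] at hnorm
  nlinarith [norm_nonneg x, norm_nonneg y]

/- Neither expansion needs the common denominator to be nonzero: where it vanishes, both sides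
are `0` by the convention `x / 0 = 0`. -/

lemma mobiusAdd_mobiusAdd_eq {a b c : ℂ} (hbc : 1 + conj b * c ≠ 0) :
    mobiusAdd a (mobiusAdd b c) =
      (a + b + c + a * conj b * c) / (1 + conj a * b + conj a * c + conj b * c) := by
  have hnum : a + (b + c) / (1 + conj b * c) =
      (a + b + c + a * conj b * c) / (1 + conj b * c) := by
    rw [add_div' _ _ _ hbc]
    ring
  have hden : 1 + conj a * ((b + c) / (1 + conj b * c)) =
      (1 + conj a * b + conj a * c + conj b * c) / (1 + conj b * c) := by
    rw [mul_div_assoc', one_add_div hbc]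
    ring
  rw [mobiusAdd, mobiusAdd, hnum, hden, div_div_div_cancel_right₀ hbc]

lemma mobiusAdd_mobiusAdd_gyr_eq {a b c : ℂ} (hab : 1 + conj a * b ≠ 0) :
    mobiusAdd (mobiusAdd a b) ((1 + a * conj b) / (1 + conj a * b) * c) =
      (a + b + c + a * conj b * c) / (1 + conj a * b + conj a * c + conj b * c) := by
  have hab' : 1 + a * conj b ≠ 0 := by
    simpa using (map_ne_zero (starRingEnd ℂ)).mpr hab
  have hnum : (a + b) / (1 + conj a * b) + (1 + a * conj b) / (1 + conj a * b) * c =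
      (a + b + c + a * conj b * c) / (1 + conj a * b) := by
    rw [div_mul_eq_mul_div, ← add_div]
    ring
  have hden : 1 + conj ((a + b) / (1 + conj a * b)) * ((1 + a * conj b) / (1 + conj a * b) * c) =
      (1 + conj a * b + conj a * c + conj b * c) / (1 + conj a * b) := by
    rw [map_div₀, map_add, map_add, map_one, map_mul, Complex.conj_conj, ← mul_assoc,
      div_mul_div_cancel₀ hab', div_mul_eq_mul_div, one_add_div hab]
    ring
  rw [mobiusAdd, mobiusAdd, hnum, hden, div_div_div_cancel_right₀ hab]

/-- The left gyroassociative law for Möbius addition on the open unit disk: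
`a ⊕ (b ⊕ c) = (a ⊕ b) ⊕ (gyr[a,b] c)` where
`gyr[a,b] c = ((1 + a·conj b)/(1 + conj a·b))·c`. -/
theorem mobius_left_gyroassociative (a b c : ℂ)
    (ha : ‖a‖ < 1) (hb : ‖b‖ < 1) (hc : ‖c‖ < 1) :
    mobiusAdd a (mobiusAdd b c) =
      mobiusAdd (mobiusAdd a b)
        ((1 + a * (starRingEnd ℂ) b) / (1 + (starRingEnd ℂ) a * b) * c) := by
  rw [mobiusAdd_mobiusAdd_eq (one_add_conj_mul_ne_zero hb hc),
    mobiusAdd_mobiusAdd_gyr_eq (one_add_conj_mul_ne_zero ha hb)]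
end
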